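/- For every real x, x^4 expanded via the partition polynomial: p_4(a_1,a_2,a_3,a_4) - p_4(-b_1,-b_2,-b_3,-b_4) = x^4, where p_n(a_1,...,a_n) = Σ over (k_1,...,k_n) with k_1 + 2k_2 + ... + n·k_n = n of ((k_1+...+k_n-1)!·n / (k_1!·...·k_n!))·a_1^{k_1}·...·a_n^{k_n}, and a_k = {x^{:k}}, b_k = ⌊x^{:k}⌋. -/

import Mathlib

/-- Iterated floor product: `x^{:0} = 1`, `x^{:k} = x * ⌊x^{:(k-1)}⌋`. -/
noncomputable def iterFloorPow (x : ℝ) : ℕ → ℝ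
  | 0 => 1
  | k + 1 => x * ⌊iterFloorPow x k⌋

/-- `a_k = {x^{:k}}`. -/
noncomputable def aSeq (x : ℝ) (k : ℕ) : ℝ := Int.fract (iterFloorPow x k)

/-- `b_k = ⌊x^{:k}⌋` regarded as a real number. -/
noncomputable def bSeq (x : ℝ) (k : ℕ) : ℝ := (⌊iterFloorPow x k⌋ : ℝ)

/-- The partition polynomial
`p_n(a_1,…,a_n) = ∑_{k_1+2k_2+⋯+nk_n=n} ((k_1+⋯+k_n-1)!·n / (k_1!⋯k_n!)) a_1^{k_1}⋯a_n^{k_n}`,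
with one term for each partition of `n`.  The multiplicity function is indexed by `i : Fin n`,
with `k i` being the exponent `k_{i+1}` of `a_{i+1}`; the bound `k i ≤ n` is automatic from
the partition condition. -/
noncomputable def pPoly (n : ℕ) (a : ℕ → ℝ) : ℝ :=
  ∑ k ∈ (Fintype.piFinset fun _ : Fin n => Finset.range (n + 1)).filter
      (fun k => ∑ i : Fin n, (i.1 + 1) * k i = n),
    (((Nat.factorial ((∑ i : Fin n, k i) - 1) * n : ℕ) : ℝ)
        / ((∏ i : Fin n, Nat.factorial (k i) : ℕ) : ℝ))
      * ∏ i : Fin n, a (i.1 + 1) ^ k i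

/-!
With `b_0 = 1`, the definitions give `a_k = x b_{k-1} - b_k`, so that
`1 - ∑ a_k t^k = (1 - x t) · ∑ b_k t^k`. Since `p_n(c)` is the coefficient of `t^n / n` in
`-log (1 - ∑ c_k t^k)`, taking logarithms yields `p_n(a) - p_n(-b) = x^n` for every `n`.
For `n = 4` this is checked by expanding `p_4` explicitly.
-/

lemma partitions_four : (Fintype.piFinset fun _ : Fin 4 => Finset.range (4 + 1)).filter
      (fun k => ∑ i : Fin 4, (i.1 + 1) * k i = 4) =
    {![4, 0, 0, 0], ![2, 1, 0, 0], ![0, 2, 0, 0], ![1, 0, 1, 0], ![0, 0, 0, 1]} := by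
  decide

lemma pPoly_four (a : ℕ → ℝ) :
    pPoly 4 a = a 1 ^ 4 + 4 * a 1 ^ 2 * a 2 + 4 * a 1 * a 3 + 2 * a 2 ^ 2 + 4 * a 4 := by
  rw [pPoly, partitions_four]
  simp [Finset.sum_insert, Fin.sum_univ_four, Fin.prod_univ_four, Nat.factorial]
  ring

lemma pPoly_four_sub_pPoly_four_neg {x : ℝ} {a b : ℕ → ℝ} (hb : b 0 = 1)
    (ha : ∀ k, a (k + 1) = x * b k - b (k + 1)) :
    pPoly 4 a - pPoly 4 (fun k => -b k) = x ^ 4 := by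
  simp only [pPoly_four, ha, hb]
  ring

lemma bSeq_zero (x : ℝ) : bSeq x 0 = 1 := by
  simp [bSeq, iterFloorPow]

lemma aSeq_succ (x : ℝ) (k : ℕ) : aSeq x (k + 1) = x * bSeq x k - bSeq x (k + 1) :=
  rfl

theorem fourth_power_partition_polynomial (x : ℝ) :
    pPoly 4 (aSeq x) - pPoly 4 (fun k => -(bSeq x k)) = x ^ 4 :=
  pPoly_four_sub_pPoly_four_neg (bSeq_zero x) (aSeq_succ x)
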